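/- arXiv:2303.09532 — 3 statements merged into one kernel-verified Lean document; each statement's English description precedes it below -/
import Mathlib

section
/- (Brezis–Ekeland attainment.) Let f : ℝⁿ → ℝ be C¹ and convex with Legendre–Fenchel conjugate f*, fix T > 0 and x₀ ∈ ℝⁿ, and let x : [0, T] → ℝⁿ be a solution of the gradient flow ẋ(t) = −∇f(x(t)) with x(0) = x₀. Then the Brezis–Ekeland action attains its minimum value: S(x(·)) := ∫₀ᵀ { f(x(t)) + f*(−ẋ(t)) } dt + (1/2)|x(T)|² = (1/2)|x₀|². -/
open scoped RealInnerProductSpace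
open Filter MeasureTheory

/-- Legendre–Fenchel conjugate: `ψ*(v) = sup_x { ⟨v, x⟩ − ψ(x) }`. -/
noncomputable def fenchel {n : ℕ} (ψ : EuclideanSpace ℝ (Fin n) → ℝ)
    (v : EuclideanSpace ℝ (Fin n)) : ℝ :=
  ⨆ z : EuclideanSpace ℝ (Fin n), (⟪v, z⟫ - ψ z)

/-- Bregman divergence: `D_ψ(y, y') = ψ(y) − ψ(y') − ⟨∇ψ(y'), y − y'⟩`. -/
noncomputable def bregman {n : ℕ} (ψ : EuclideanSpace ℝ (Fin n) → ℝ)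
    (y y' : EuclideanSpace ℝ (Fin n)) : ℝ :=
  ψ y - ψ y' - ⟪gradient ψ y', y - y'⟫

/-- `φ` is of Legendre type: `|∇φ(x)| → ∞` as `|x| → ∞`. -/
def LegendreType {n : ℕ} (φ : EuclideanSpace ℝ (Fin n) → ℝ) : Prop :=
  Tendsto (fun z => ‖gradient φ z‖) (cocompact (EuclideanSpace ℝ (Fin n))) atTop
/-!
Along the flow `-ẋ(t) = ∇f(x(t))`, so Fenchel–Young holds with equality:
`f(x) + f*(-ẋ) = ⟪-ẋ, x⟫ = -½ d/dt ‖x‖²`. Integrating over `[0, T]` turns the action into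
`½‖x₀‖² - ½‖x(T)‖² + ½‖x(T)‖²`.
-/

open Set

theorem ConvexOn.apply_sub_le_sub_of_hasFDerivAt {E : Type*} [NormedAddCommGroup E]
    [NormedSpace ℝ E] {s : Set E} {f : E → ℝ} {f' : E →L[ℝ] ℝ} {y z : E}
    (hfc : ConvexOn ℝ s f) (hy : y ∈ s) (hz : z ∈ s) (hf : HasFDerivAt f f' y) :
    f' (z - y) ≤ f z - f y := by
  have hline :
      ConvexOn ℝ (AffineMap.lineMap (k := ℝ) y z ⁻¹' s) (f ∘ AffineMap.lineMap y z) :=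
    hfc.comp_affineMap _
  have hderiv : HasDerivAt (f ∘ AffineMap.lineMap (k := ℝ) y z) (f' (z - y)) 0 := by
    have hf0 : HasFDerivAt f f' (AffineMap.lineMap y z (0 : ℝ)) := by simpa using hf
    exact hf0.comp_hasDerivAt 0 AffineMap.hasDerivAt_lineMap
  simpa [slope] using hline.le_slope_of_hasDerivAt (by simpa using hy) (by simpa using hz)
    zero_lt_one hderiv

theorem fenchel_gradient_eq {n : ℕ} {f : EuclideanSpace ℝ (Fin n) → ℝ}
    {y : EuclideanSpace ℝ (Fin n)} (hfc : ConvexOn ℝ univ f) (hf : DifferentiableAt ℝ f y) :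
    fenchel f (gradient f y) = ⟪gradient f y, y⟫ - f y := by
  have hle : ∀ z, ⟪gradient f y, z⟫ - f z ≤ ⟪gradient f y, y⟫ - f y := fun z => by
    have := hfc.apply_sub_le_sub_of_hasFDerivAt (mem_univ y) (mem_univ z)
      hf.hasGradientAt.hasFDerivAt
    rw [InnerProductSpace.toDual_apply_apply, inner_sub_right] at this
    linarith
  exact le_antisymm (ciSup_le hle) (le_ciSup ⟨_, forall_mem_range.2 hle⟩ y)

theorem ContDiff.continuous_gradient {E : Type*} [NormedAddCommGroup E] [InnerProductSpace ℝ E]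
    [CompleteSpace E] {f : E → ℝ} {n : WithTop ℕ∞} (hf : ContDiff ℝ n f) (hn : n ≠ 0) :
    Continuous (gradient f) :=
  (InnerProductSpace.toDual ℝ E).symm.continuous.comp (hf.continuous_fderiv hn)

theorem integral_inner_self_deriv {F : Type*} [NormedAddCommGroup F] [InnerProductSpace ℝ F]
    {x x' : ℝ → F} {a b : ℝ} (hab : a ≤ b)
    (hx : ∀ t ∈ Icc a b, HasDerivWithinAt x (x' t) (Icc a b) t)
    (hint : IntervalIntegrable (fun t => ⟪x t, x' t⟫) volume a b) :
    ∫ t in a..b, ⟪x t, x' t⟫ = (‖x b‖ ^ 2 - ‖x a‖ ^ 2) / 2 := by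
  have hftc : ∫ t in a..b, 2 * ⟪x t, x' t⟫ = ‖x b‖ ^ 2 - ‖x a‖ ^ 2 := by
    refine intervalIntegral.integral_eq_sub_of_hasDeriv_right_of_le hab
      (fun t ht => (hx t ht).continuousWithinAt.norm.pow 2) (fun t ht => ?_) (hint.const_mul 2)
    exact ((hx t (Ioo_subset_Icc_self ht)).mono_of_mem_nhdsWithin
      (Icc_mem_nhdsGT_of_mem (Ioo_subset_Ico_self ht))).norm_sq
  rw [intervalIntegral.integral_const_mul] at hftc
  linarith

/-- Brezis–Ekeland attainment: for C¹ convex `f` and `x` a solution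
of the gradient flow `ẋ = −∇f(x)` on `[0,T]` with `x(0) = x₀` (so `−ẋ(t) = ∇f(x(t))`),
the Brezis–Ekeland action attains its minimum:
`∫₀ᵀ {f(x(t)) + f*(−ẋ(t))} dt + ½|x(T)|² = ½|x₀|²`. -/
theorem brezis_ekeland_attainment {n : ℕ} (f : EuclideanSpace ℝ (Fin n) → ℝ)
    (hf : ContDiff ℝ 1 f) (hfconv : ConvexOn ℝ Set.univ f)
    (T : ℝ) (hT : 0 < T)
    (x₀ : EuclideanSpace ℝ (Fin n))
    (x : ℝ → EuclideanSpace ℝ (Fin n))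
    (hx0 : x 0 = x₀)
    (hode : ∀ t ∈ Set.Icc (0:ℝ) T,
      HasDerivWithinAt x (-gradient f (x t)) (Set.Icc (0:ℝ) T) t) :
    (∫ t in (0:ℝ)..T, (f (x t) + fenchel f (gradient f (x t)))) + (1/2) * ‖x T‖^2
      = (1/2) * ‖x₀‖^2 := by
  have hx : ContinuousOn x (Icc 0 T) := fun t ht => (hode t ht).continuousWithinAt
  have hgrad : ContinuousOn (fun t => gradient f (x t)) (Icc 0 T) :=
    (hf.continuous_gradient one_ne_zero).comp_continuousOn hx
  have hint : IntervalIntegrable (fun t => ⟪x t, -gradient f (x t)⟫) volume 0 T :=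
    (hx.inner hgrad.neg).intervalIntegrable_of_Icc hT.le
  have hyoung : ∀ t, f (x t) + fenchel f (gradient f (x t)) = -⟪x t, -gradient f (x t)⟫ :=
    fun t => by
      rw [fenchel_gradient_eq hfconv ((hf.differentiable one_ne_zero) _), inner_neg_right,
        real_inner_comm]
      ring
  simp only [hyoung, intervalIntegral.integral_neg, integral_inner_self_deriv hT.le hode hint, hx0]
  ring
end

section
/- Let f : ℝⁿ → ℝ be C¹ and strictly convex with unique global minimizer ȳ, and let φ : ℝⁿ → ℝ be C², strictly convex, Legendre type, with conjugate φ*. Let x : [0, ∞) → ℝⁿ solve ẋ(t) = −∇f(∇φ*(x(t))) with output y(t) := ∇φ*(x(t)) and y₀ := y(0). Then t ↦ D_φ(ȳ, y(t)) is nonincreasing; in particular D_φ(ȳ, y(t)) ≤ D_φ(ȳ, y₀) for all t ≥ 0. -/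
open scoped RealInnerProductSpace
open Filter MeasureTheory

/-!
Along the flow, `D_φ(ȳ, y(t)) = φ(ȳ) + φ*(x(t)) - ⟪x(t), ȳ⟫` with `∇φ* = (∇φ)⁻¹`, so its derivative
is `⟪ẋ, y - ȳ⟫ = -⟪∇f(y), y - ȳ⟫ ≤ f(ȳ) - f(y) ≤ 0` by convexity of `f`.

The analytic work is to show that `∇φ` is a homeomorphism, which makes `φ*` finite and
differentiable with gradient `(∇φ)⁻¹`: `∇φ` is injective by strict convexity, closed since
`‖∇φ‖ → ∞` makes it proper, and surjective because a minimizer of `φ - ⟪v, ·⟫` over a ball of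
radius `r` has gradient pointing inward, so by monotonicity of `∇φ` its norm stays bounded as `r`
grows, which by coercivity traps the minimizer inside the ball, where it is a critical point.
-/

open Set Topology

theorem isClosedMap_of_tendsto_norm_cocompact {X F : Type*} [TopologicalSpace X]
    [NormedAddCommGroup F] [ProperSpace F] {G : X → F} (hG : Continuous G)
    (hcoer : Tendsto (fun z => ‖G z‖) (cocompact X) atTop) : IsClosedMap G :=
  (isProperMap_iff_tendsto_cocompact.2 ⟨hG, by
    simpa [← Metric.cobounded_eq_cocompact, tendsto_norm_atTop_iff_cobounded] using hcoer⟩).isClosedMap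

section

variable {E : Type*} [NormedAddCommGroup E] [InnerProductSpace ℝ E] [CompleteSpace E]
  {g : E → ℝ} {g' z : E}

theorem ContDiff.continuous_gradient_s17 {n : WithTop ℕ∞} (hg : ContDiff ℝ n g) (hn : n ≠ 0) :
    Continuous (gradient g) :=
  (InnerProductSpace.toDual ℝ E).symm.continuous.comp (hg.continuous_fderiv hn)

theorem HasGradientAt.comp_hasDerivAt {x : ℝ → E} {x' : E} {t : ℝ}
    (hg : HasGradientAt g g' (x t)) (hx : HasDerivAt x x' t) :
    HasDerivAt (fun s => g (x s)) ⟪g', x'⟫ t :=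
  hg.hasFDerivAt.comp_hasDerivAt t hx

theorem hasGradientAt_inner_left (v z : E) : HasGradientAt (fun w => ⟪v, w⟫) v z :=
  (InnerProductSpace.toDual ℝ E v).hasFDerivAt

theorem ConvexOn.add_inner_le_of_hasGradientAt (hg : ConvexOn ℝ univ g)
    (hz : HasGradientAt g g' z) (w : E) : g z + ⟪g', w - z⟫ ≤ g w := by
  let ℓ : ℝ →ᵃ[ℝ] E := AffineMap.lineMap z w
  have hz₀ : HasFDerivAt g (InnerProductSpace.toDual ℝ E g') (ℓ 0) := by
    simpa [ℓ] using hz.hasFDerivAt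
  have hline : HasDerivAt (g ∘ ℓ) ⟪g', w - z⟫ 0 :=
    hz₀.comp_hasDerivAt 0 AffineMap.hasDerivAt_lineMap
  have hslope := (hg.comp_affineMap ℓ).le_slope_of_hasDerivAt
    (mem_univ 0) (mem_univ 1) one_pos hline
  simp only [slope_def_field, Function.comp_apply, sub_zero, div_one, ℓ,
    AffineMap.lineMap_apply_zero, AffineMap.lineMap_apply_one] at hslope
  linarith

theorem ConvexOn.inner_sub_le_of_hasGradientAt (hg : ConvexOn ℝ univ g)
    (hz : HasGradientAt g g' z) (w : E) : ⟪g', w⟫ - g w ≤ ⟪g', z⟫ - g z := by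
  have := hg.add_inner_le_of_hasGradientAt hz w
  rw [inner_sub_right] at this
  linarith

theorem ConvexOn.inner_sub_nonneg_of_le (hg : ConvexOn ℝ univ g) (hz : HasGradientAt g g' z)
    {w : E} (hle : g w ≤ g z) : 0 ≤ ⟪g', z - w⟫ := by
  have := hg.add_inner_le_of_hasGradientAt hz w
  rw [← neg_sub, inner_neg_right] at this
  linarith

theorem ConvexOn.inner_sub_sub_nonneg_of_hasGradientAt (hg : ConvexOn ℝ univ g) {z' g'' : E}
    (hz : HasGradientAt g g' z) (hz' : HasGradientAt g g'' z') : 0 ≤ ⟪g'' - g', z' - z⟫ := by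
  have h₁ := hg.add_inner_le_of_hasGradientAt hz z'
  have h₂ := hg.add_inner_le_of_hasGradientAt hz' z
  rw [← neg_sub z' z, inner_neg_right] at h₂
  rw [inner_sub_left]
  linarith

theorem StrictConvexOn.injective_of_hasGradientAt {G : E → E} (hg : StrictConvexOn ℝ univ g)
    (hG : ∀ z, HasGradientAt g (G z) z) : Function.Injective G := by
  intro a b hab
  by_contra hne
  have hmid := hg.2 (mem_univ a) (mem_univ b) hne one_half_pos one_half_pos (add_halves 1)
  set m : E := (1 / 2 : ℝ) • a + (1 / 2 : ℝ) • b
  have ha := hg.convexOn.add_inner_le_of_hasGradientAt (hG a) m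
  have hb := hg.convexOn.add_inner_le_of_hasGradientAt (hG b) m
  have hcancel : ⟪G a, m - a⟫ + ⟪G b, m - b⟫ = 0 := by
    rw [hab, ← inner_add_right, show m - a + (m - b) = 0 by module, inner_zero_right]
  simp only [smul_eq_mul] at hmid
  linarith

theorem IsMinOn.inner_sub_nonneg_of_hasGradientAt {s : Set E} (hmin : IsMinOn g s z)
    (hs : Convex ℝ s) (hz : z ∈ s) (hg : HasGradientAt g g' z) {w : E} (hw : w ∈ s) :
    0 ≤ ⟪g', w - z⟫ :=
  hmin.localize.hasFDerivWithinAt_nonneg hg.hasFDerivAt.hasFDerivWithinAt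
    (sub_mem_posTangentConeAt_of_segment_subset (hs.segment_subset hz hw))

theorem IsMinOn.inner_le_neg_mul_norm_of_closedBall {r : ℝ}
    (hmin : IsMinOn g (Metric.closedBall 0 r) z) (hz : z ∈ Metric.closedBall 0 r)
    (hg : HasGradientAt g g' z) : ⟪g', z⟫ ≤ -(r * ‖g'‖) := by
  have hr : 0 ≤ r := Metric.nonempty_closedBall.1 ⟨z, hz⟩
  set w : E := -(r / ‖g'‖) • g'
  have hw : w ∈ Metric.closedBall 0 r := by
    rw [mem_closedBall_zero_iff, norm_smul, norm_neg, Real.norm_of_nonneg (by positivity)]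
    rcases eq_or_ne g' 0 with rfl | hg'
    · simpa using hr
    · rw [div_mul_cancel₀ _ (norm_ne_zero_iff.2 hg')]
  have hinner : ⟪g', w⟫ = -(r * ‖g'‖) := by
    rw [real_inner_smul_right, real_inner_self_eq_norm_sq]
    rcases eq_or_ne g' 0 with rfl | hg'
    · simp
    · field_simp
  have := hmin.inner_sub_nonneg_of_hasGradientAt (convex_closedBall 0 r) hz hg hw
  rw [inner_sub_right, hinner] at this
  linarith

/-- The gradient at a minimizer over a closed ball centred at `0` points inward, so by monotonicity
of the gradient its norm cannot increase with the radius. -/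
theorem ConvexOn.norm_le_of_isMinOn_closedBall (hg : ConvexOn ℝ univ g) {r₁ r₂ : ℝ}
    (hr : r₁ < r₂) {z₁ z₂ g₁ g₂ : E}
    (hmin₁ : IsMinOn g (Metric.closedBall 0 r₁) z₁) (hz₁ : z₁ ∈ Metric.closedBall 0 r₁)
    (hg₁ : HasGradientAt g g₁ z₁)
    (hmin₂ : IsMinOn g (Metric.closedBall 0 r₂) z₂) (hz₂ : z₂ ∈ Metric.closedBall 0 r₂)
    (hg₂ : HasGradientAt g g₂ z₂) : ‖g₂‖ ≤ ‖g₁‖ := by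
  have hmono := hg.inner_sub_sub_nonneg_of_hasGradientAt hg₁ hg₂
  have h₁ := hmin₁.inner_le_neg_mul_norm_of_closedBall hz₁ hg₁
  have h₂ := hmin₂.inner_le_neg_mul_norm_of_closedBall hz₂ hg₂
  have h₂₁ : -⟪g₂, z₁⟫ ≤ ‖g₂‖ * r₁ := by
    have := real_inner_le_norm (-g₂) z₁
    rw [inner_neg_left, norm_neg] at this
    nlinarith [mem_closedBall_zero_iff.1 hz₁, norm_nonneg g₂]
  have h₁₂ : -⟪g₁, z₂⟫ ≤ ‖g₁‖ * r₂ := by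
    have := real_inner_le_norm (-g₁) z₂
    rw [inner_neg_left, norm_neg] at this
    nlinarith [mem_closedBall_zero_iff.1 hz₂, norm_nonneg g₁]
  simp only [inner_sub_left, inner_sub_right] at hmono
  nlinarith

theorem ConvexOn.exists_hasGradientAt_eq_zero [ProperSpace E] {G : E → E}
    (hg : ConvexOn ℝ univ g) (hG : ∀ z, HasGradientAt g (G z) z)
    (hcoer : Tendsto (fun z => ‖G z‖) (cocompact E) atTop) : ∃ z, G z = 0 := by
  have hmin : ∀ r, 0 ≤ r → ∃ z ∈ Metric.closedBall (0 : E) r,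
      IsMinOn g (Metric.closedBall 0 r) z := fun r hr =>
    (isCompact_closedBall 0 r).exists_isMinOn (Metric.nonempty_closedBall.2 hr)
      (continuous_iff_continuousAt.2 fun z => (hG z).continuousAt).continuousOn
  obtain ⟨z₁, hz₁, hmin₁⟩ := hmin 1 zero_le_one
  rw [← Metric.cobounded_eq_cocompact] at hcoer
  obtain ⟨R, -, hR⟩ := hasBasis_cobounded_norm.eventually_iff.1
    (hcoer.eventually (eventually_gt_atTop ‖G z₁‖))
  set r := max R 1 + 1
  obtain ⟨z, hz, hminz⟩ := hmin r (by positivity)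
  have hzR : ‖z‖ < R := by
    by_contra! h
    exact (hR h).not_ge
      (hg.norm_le_of_isMinOn_closedBall (by simp [r]) hmin₁ hz₁ (hG z₁) hminz hz (hG z))
  have hloc : IsLocalMin g z := hminz.isLocalMin
    (Metric.closedBall_mem_nhds_of_mem (by simp [r]; linarith [le_max_left R 1]))
  exact ⟨z, by simpa using hloc.hasFDerivAt_eq_zero (hG z).hasFDerivAt⟩

theorem ConvexOn.surjective_of_hasGradientAt [ProperSpace E] {G : E → E}
    (hg : ConvexOn ℝ univ g) (hG : ∀ z, HasGradientAt g (G z) z)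
    (hcoer : Tendsto (fun z => ‖G z‖) (cocompact E) atTop) : Function.Surjective G := by
  intro v
  have htilt : ConvexOn ℝ univ fun w => g w - ⟪v, w⟫ :=
    hg.sub ((innerₛₗ ℝ v).concaveOn convex_univ)
  have htiltG : ∀ z, HasGradientAt (fun w => g w - ⟪v, w⟫) (G z - v) z := fun z => by
    rw [hasGradientAt_iff_hasFDerivAt, map_sub]
    exact (hG z).hasFDerivAt.sub (hasGradientAt_inner_left v z).hasFDerivAt
  have hcoer' : Tendsto (fun z => ‖G z - v‖) (cocompact E) atTop :=
    tendsto_atTop_mono (fun z => by linarith [norm_sub_norm_le (G z) v])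
      (tendsto_atTop_add_const_right _ (-‖v‖) hcoer)
  obtain ⟨z, hz⟩ := htilt.exists_hasGradientAt_eq_zero htiltG hcoer'
  exact ⟨z, sub_eq_zero.1 hz⟩

theorem StrictConvexOn.exists_continuous_inverse_of_hasGradientAt [ProperSpace E] {G : E → E}
    (hg : StrictConvexOn ℝ univ g) (hG : ∀ z, HasGradientAt g (G z) z) (hGc : Continuous G)
    (hcoer : Tendsto (fun z => ‖G z‖) (cocompact E) atTop) :
    ∃ Z : E → E, Continuous Z ∧ ∀ v, HasGradientAt g v (Z v) := by
  let e : E ≃ₜ E := (Equiv.ofBijective G ⟨hg.injective_of_hasGradientAt hG,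
    hg.convexOn.surjective_of_hasGradientAt hG hcoer⟩).toHomeomorphOfContinuousClosed hGc
    (isClosedMap_of_tendsto_norm_cocompact hGc hcoer)
  exact ⟨e.symm, e.symm.continuous, fun v => by
    convert hG (e.symm v); exact (e.apply_symm_apply v).symm⟩

theorem hasGradientAt_of_forall_add_inner_le {F : E → ℝ} {Z : E → E} {v : E}
    (hsub : ∀ u w, F u + ⟪Z u, w - u⟫ ≤ F w) (hZ : ContinuousAt Z v) :
    HasGradientAt F (Z v) v := by
  rw [hasGradientAt_iff_isLittleO, Asymptotics.isLittleO_iff]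
  intro c hc
  have hclose : ∀ᶠ w in 𝓝 v, ‖Z w - Z v‖ < c := by
    simpa [dist_eq_norm] using hZ.eventually (Metric.ball_mem_nhds (Z v) hc)
  filter_upwards [hclose] with w hw
  have hlower := hsub v w
  have hupper := hsub w v
  rw [← neg_sub w v, inner_neg_right] at hupper
  calc ‖F w - F v - ⟪Z v, w - v⟫‖ = F w - F v - ⟪Z v, w - v⟫ :=
        Real.norm_of_nonneg (by linarith)
    _ ≤ ⟪Z w - Z v, w - v⟫ := by rw [inner_sub_left]; linarith
    _ ≤ ‖Z w - Z v‖ * ‖w - v‖ := real_inner_le_norm _ _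
    _ ≤ c * ‖w - v‖ := by gcongr

end

section

variable {n : ℕ} {φ : EuclideanSpace ℝ (Fin n) → ℝ} {v z : EuclideanSpace ℝ (Fin n)}

theorem fenchel_eq_of_hasGradientAt (hφ : ConvexOn ℝ univ φ) (hz : HasGradientAt φ v z) :
    fenchel φ v = ⟪v, z⟫ - φ z :=
  le_antisymm (ciSup_le (hφ.inner_sub_le_of_hasGradientAt hz))
    (le_ciSup ⟨_, forall_mem_range.2 (hφ.inner_sub_le_of_hasGradientAt hz)⟩ z)

theorem bregman_eq_fenchel_of_hasGradientAt (hφ : ConvexOn ℝ univ φ) (hz : HasGradientAt φ v z)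
    (y : EuclideanSpace ℝ (Fin n)) : bregman φ y z = φ y + fenchel φ v - ⟪v, y⟫ := by
  rw [bregman, hz.gradient, fenchel_eq_of_hasGradientAt hφ hz, inner_sub_right]
  ring

theorem hasGradientAt_fenchel {Z : EuclideanSpace ℝ (Fin n) → EuclideanSpace ℝ (Fin n)}
    (hφ : ConvexOn ℝ univ φ) (hZ : ∀ v, HasGradientAt φ v (Z v)) (hZc : ContinuousAt Z v) :
    HasGradientAt (fenchel φ) (Z v) v := by
  refine hasGradientAt_of_forall_add_inner_le (fun u w => ?_) hZc
  have := hφ.inner_sub_le_of_hasGradientAt (hZ w) (Z u)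
  rw [fenchel_eq_of_hasGradientAt hφ (hZ u), fenchel_eq_of_hasGradientAt hφ (hZ w),
    inner_sub_right, real_inner_comm w (Z u), real_inner_comm u (Z u)]
  linarith

theorem hasDerivAt_bregman_fenchel {Z : EuclideanSpace ℝ (Fin n) → EuclideanSpace ℝ (Fin n)}
    (hφ : ConvexOn ℝ univ φ) (hZ : ∀ v, HasGradientAt φ v (Z v))
    {x : ℝ → EuclideanSpace ℝ (Fin n)} {x' : EuclideanSpace ℝ (Fin n)} {t : ℝ}
    (hZc : ContinuousAt Z (x t)) (hx : HasDerivAt x x' t) (y : EuclideanSpace ℝ (Fin n)) :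
    HasDerivAt (fun s => bregman φ y (Z (x s))) ⟪x', Z (x t) - y⟫ t := by
  have hsum := (((hasGradientAt_fenchel hφ hZ hZc).comp_hasDerivAt hx).const_add (φ y)).sub
    (hx.inner ℝ (hasDerivAt_const t y))
  rw [funext fun s => bregman_eq_fenchel_of_hasGradientAt hφ (hZ (x s)) y]
  refine hsum.congr_deriv ?_
  rw [inner_zero_right, zero_add, inner_sub_right, real_inner_comm x']

end

/-- along the mirror-descent closed loop, `t ↦ D_φ(ȳ, y(t))` is
nonincreasing on `[0, ∞)`; in particular `D_φ(ȳ, y(t)) ≤ D_φ(ȳ, y₀)`. -/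
theorem bregman_to_minimizer_nonincreasing {n : ℕ} (f φ : EuclideanSpace ℝ (Fin n) → ℝ)
    (hf : ContDiff ℝ 1 f) (hfconv : StrictConvexOn ℝ Set.univ f)
    (ybar : EuclideanSpace ℝ (Fin n)) (hmin : ∀ z, f ybar ≤ f z)
    (hφ : ContDiff ℝ 2 φ) (hφconv : StrictConvexOn ℝ Set.univ φ)
    (hleg : LegendreType φ)
    (x y : ℝ → EuclideanSpace ℝ (Fin n))
    (hode : ∀ t : ℝ, 0 ≤ t →
      HasDerivAt x (-gradient f (gradient (fenchel φ) (x t))) t)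
    (hy : y = fun t => gradient (fenchel φ) (x t)) :
    AntitoneOn (fun t => bregman φ ybar (y t)) (Set.Ici (0:ℝ)) ∧
    ∀ t : ℝ, 0 ≤ t → bregman φ ybar (y t) ≤ bregman φ ybar (y 0) := by
  obtain ⟨Z, hZc, hZ⟩ := hφconv.exists_continuous_inverse_of_hasGradientAt
    (fun z => ((hφ.differentiable two_ne_zero) z).hasGradientAt)
    (hφ.continuous_gradient_s17 two_ne_zero) hleg
  have hgradZ : ∀ v, gradient (fenchel φ) v = Z v := fun v =>
    (hasGradientAt_fenchel hφconv.convexOn hZ hZc.continuousAt).gradient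
  simp only [hgradZ] at hode hy
  subst hy
  have hderiv : ∀ t ∈ Ici (0 : ℝ), HasDerivAt (fun t => bregman φ ybar (Z (x t)))
      (-⟪gradient f (Z (x t)), Z (x t) - ybar⟫) t := fun t ht => by
    simpa using hasDerivAt_bregman_fenchel hφconv.convexOn hZ hZc.continuousAt (hode t ht) ybar
  have hdescent : ∀ t, 0 ≤ ⟪gradient f (Z (x t)), Z (x t) - ybar⟫ := fun t =>
    hfconv.convexOn.inner_sub_nonneg_of_le
      ((hf.differentiable one_ne_zero) _).hasGradientAt (hmin _)
  have hanti : AntitoneOn (fun t => bregman φ ybar (Z (x t))) (Ici 0) :=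
    antitoneOn_of_hasDerivWithinAt_nonpos (convex_Ici 0)
      (fun t ht => (hderiv t ht).continuousAt.continuousWithinAt)
      (fun t ht => (hderiv t (interior_subset ht)).hasDerivWithinAt)
      (fun t _ => neg_nonpos.2 (hdescent t))
  exact ⟨hanti, fun t ht => hanti self_mem_Ici ht ht⟩
end

section
/- Let f : ℝⁿ → ℝ be C¹ and strictly convex with unique global minimizer ȳ and with L_f-Lipschitz gradient, and let φ : ℝⁿ → ℝ be C², α-strongly convex (α > 0), Legendre type, with conjugate φ*. Let x : [0, ∞) → ℝⁿ solve ẋ(t) = −∇f(∇φ*(x(t))) with output y(t) := ∇φ*(x(t)). Then for all t ≥ 0, |∇f(y(t))| ≤ 2 L_f √( (2/α) D_φ(ȳ, y(0)) ) + |∇f(y(0))|. -/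
open scoped RealInnerProductSpace
open Filter MeasureTheory

/-! `D_φ(ȳ, y(t))` is a Lyapunov function of the flow. Strong convexity makes `∇φ` a bijection
and `φ*` differentiable with `∇φ* = (∇φ)⁻¹`, so in the dual variable the divergence reads
`φ(ȳ) + φ*(x) − ⟪ȳ, x⟫`; its time derivative is `⟪∇f(y), ȳ − y⟫ ≤ f(ȳ) − f(y) ≤ 0`.
Strong convexity again gives `|y(t) − ȳ|² ≤ (2/α) D_φ(ȳ, y(t)) ≤ (2/α) D_φ(ȳ, y(0))`, and as
`∇f(ȳ) = 0`, the Lipschitz bound yields `|∇f(y(t))| ≤ L_f |y(t) − ȳ|`, stronger than the claim. -/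

section InnerProductSpace

variable {E : Type*} [NormedAddCommGroup E] [InnerProductSpace ℝ E] [CompleteSpace E]

theorem IsLocalMin.gradient_eq_zero {f : E → ℝ} {a : E} (h : IsLocalMin f a) :
    gradient f a = 0 := by
  simp [gradient, h.fderiv_eq_zero]

theorem ConvexOn.inner_gradient_le_sub {f : E → ℝ} (hf : ConvexOn ℝ Set.univ f) {a : E}
    (ha : DifferentiableAt ℝ f a) (b : E) : ⟪gradient f a, b - a⟫ ≤ f b - f a := by
  set L : ℝ →ᵃ[ℝ] E := AffineMap.lineMap a b
  have hf' : HasFDerivAt f (InnerProductSpace.toDual ℝ E (gradient f a)) (L 0) := by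
    simpa [L] using ha.hasGradientAt.hasFDerivAt
  have hline : HasDerivAt (f ∘ L) ⟪gradient f a, b - a⟫ 0 := by
    simpa using hf'.comp_hasDerivAt (0 : ℝ) AffineMap.hasDerivAt_lineMap
  have hconv : ConvexOn ℝ Set.univ (f ∘ L) := by
    simpa using hf.comp_affineMap L
  simpa [hline.deriv, slope, L] using hconv.deriv_le_slope (Set.mem_univ 0) (Set.mem_univ 1)
    zero_lt_one hline.differentiableAt

theorem hasGradientAt_of_abs_sub_inner_le {g : E → ℝ} {g' x : E} {C : ℝ}
    (h : ∀ w, |g w - g x - ⟪g', w - x⟫| ≤ C * ‖w - x‖ ^ 2) : HasGradientAt g g' x := by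
  rw [hasGradientAt_iff_isLittleO_nhds_zero]
  refine Asymptotics.IsBigO.trans_isLittleO ?_ (Asymptotics.isLittleO_norm_pow_id one_lt_two)
  refine Asymptotics.IsBigO.of_bound C (Eventually.of_forall fun w => ?_)
  simpa using h (x + w)

def StronglyConvexFirstOrder (φ : E → ℝ) (α : ℝ) : Prop :=
  ∀ y y' : E, φ y + ⟪gradient φ y, y' - y⟫ + (α / 2) * ‖y' - y‖ ^ 2 ≤ φ y'

namespace StronglyConvexFirstOrder

variable {φ : E → ℝ} {α : ℝ}

theorem mul_sq_norm_sub_le_inner_gradient_sub (hφ : StronglyConvexFirstOrder φ α) (z z' : E) :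
    α * ‖z' - z‖ ^ 2 ≤ ⟪gradient φ z' - gradient φ z, z' - z⟫ := by
  have h := hφ z z'
  have h' := hφ z' z
  rw [norm_sub_rev z z', ← neg_sub z' z, inner_neg_right] at h'
  rw [inner_sub_left]
  linarith

theorem norm_sub_le_norm_gradient_sub_div (hφ : StronglyConvexFirstOrder φ α) (hα : 0 < α)
    (z z' : E) : ‖z' - z‖ ≤ ‖gradient φ z' - gradient φ z‖ / α := by
  rw [le_div_iff₀ hα]
  rcases (norm_nonneg (z' - z)).eq_or_lt with h0 | hpos
  · rw [← h0, zero_mul]; positivity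
  · refine le_of_mul_le_mul_right ?_ hpos
    nlinarith [hφ.mul_sq_norm_sub_le_inner_gradient_sub z z',
      real_inner_le_norm (gradient φ z' - gradient φ z) (z' - z)]

theorem surjective_gradient [ProperSpace E] (hφ : StronglyConvexFirstOrder φ α)
    (hdiff : Differentiable ℝ φ) (hα : 0 < α) : Function.Surjective (gradient φ) := by
  intro v
  set c := ‖gradient φ 0 - v‖
  have hcoercive : ∀ z, φ 0 - c ^ 2 / α + α / 4 * ‖z‖ ^ 2 ≤ φ z - ⟪v, z⟫ := by
    intro z
    have h := hφ 0 z
    simp only [sub_zero] at h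
    have hcs := neg_le_of_abs_le (abs_real_inner_le_norm (gradient φ 0 - v) z)
    have hamgm : c * ‖z‖ ≤ c ^ 2 / α + α / 4 * ‖z‖ ^ 2 := by
      rw [div_add' _ _ _ hα.ne', le_div_iff₀ hα]
      nlinarith [sq_nonneg (c - α / 2 * ‖z‖)]
    rw [inner_sub_left] at hcs
    linarith
  have htendsto : Tendsto (fun z => φ z - ⟪v, z⟫) (cocompact E) atTop :=
    tendsto_atTop_mono hcoercive <| tendsto_atTop_add_const_left _ _ <|
      (tendsto_const_mul_pow_atTop two_ne_zero (by positivity)).comp tendsto_norm_cocompact_atTop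
  obtain ⟨z, hz⟩ :=
    (hdiff.continuous.sub (continuous_const.inner continuous_id)).exists_forall_le htendsto
  have hgrad : HasGradientAt (fun z => φ z - ⟪v, z⟫) (gradient φ z - v) z := by
    rw [hasGradientAt_iff_hasFDerivAt, map_sub]
    exact (hdiff z).hasGradientAt.hasFDerivAt.sub (innerSL ℝ v).hasFDerivAt
  refine ⟨z, sub_eq_zero.mp ?_⟩
  rw [← hgrad.gradient]
  exact ((isMinOn_univ_iff.2 hz).isLocalMin univ_mem).gradient_eq_zero

theorem add_inner_gradient_le (hφ : StronglyConvexFirstOrder φ α) (hα : 0 ≤ α) (y y' : E) :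
    φ y + ⟪gradient φ y, y' - y⟫ ≤ φ y' := by
  nlinarith [hφ y y', sq_nonneg ‖y' - y‖]

end StronglyConvexFirstOrder

end InnerProductSpace

section EuclideanSpace

variable {n : ℕ} {φ : EuclideanSpace ℝ (Fin n) → ℝ} {α : ℝ}

theorem StronglyConvexFirstOrder.sq_norm_sub_le_bregman (hφ : StronglyConvexFirstOrder φ α)
    (hα : 0 < α) (y y' : EuclideanSpace ℝ (Fin n)) : ‖y' - y‖ ^ 2 ≤ 2 / α * bregman φ y' y := by
  have h := hφ y y'
  rw [bregman, div_mul_eq_mul_div, le_div_iff₀ hα]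
  linarith

theorem inner_sub_le_fenchel {v z : EuclideanSpace ℝ (Fin n)}
    (hv : ∀ z', φ z + ⟪v, z' - z⟫ ≤ φ z') (w : EuclideanSpace ℝ (Fin n)) :
    ⟪v, w⟫ - φ w ≤ fenchel φ v := by
  refine le_ciSup (f := fun z' => ⟪v, z'⟫ - φ z') ⟨⟪v, z⟫ - φ z, ?_⟩ w
  rintro _ ⟨z', rfl⟩
  linarith [hv z', inner_sub_right (𝕜 := ℝ) v z' z]

theorem fenchel_eq_of_subgradient {v z : EuclideanSpace ℝ (Fin n)}
    (hv : ∀ z', φ z + ⟪v, z' - z⟫ ≤ φ z') : fenchel φ v = ⟪v, z⟫ - φ z :=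
  le_antisymm (ciSup_le fun z' => by linarith [hv z', inner_sub_right (𝕜 := ℝ) v z' z])
    (inner_sub_le_fenchel hv z)

theorem hasGradientAt_fenchel_gradient (hφ : StronglyConvexFirstOrder φ α)
    (hdiff : Differentiable ℝ φ) (hα : 0 < α) (z : EuclideanSpace ℝ (Fin n)) :
    HasGradientAt (fenchel φ) z (gradient φ z) := by
  have hsub := hφ.add_inner_gradient_le hα.le
  refine hasGradientAt_of_abs_sub_inner_le (C := 1 / α) fun w => ?_
  obtain ⟨z', rfl⟩ := hφ.surjective_gradient hdiff hα w
  -- The two Fenchel–Young inequalities trap the remainder between `0` and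
  -- `⟪∇φ z' - ∇φ z, z' - z⟫ ≤ ‖∇φ z' - ∇φ z‖ ^ 2 / α`.
  set g := gradient φ z
  set g' := gradient φ z'
  have hz := fenchel_eq_of_subgradient (hsub z)
  have hz' := fenchel_eq_of_subgradient (hsub z')
  have hlower := inner_sub_le_fenchel (hsub z') z
  have hupper := inner_sub_le_fenchel (hsub z) z'
  have hinner : ⟪z, g' - g⟫ = ⟪g', z⟫ - ⟪g, z⟫ := by
    rw [inner_sub_right, real_inner_comm z, real_inner_comm z]
  have hcross : ⟪g' - g, z' - z⟫ = ⟪g', z'⟫ - ⟪g, z'⟫ - (⟪g', z⟫ - ⟪g, z⟫) := by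
    simp only [inner_sub_left, inner_sub_right]
  have hbound : ⟪g' - g, z' - z⟫ ≤ 1 / α * ‖g' - g‖ ^ 2 := calc
    ⟪g' - g, z' - z⟫ ≤ ‖g' - g‖ * ‖z' - z‖ := real_inner_le_norm _ _
    _ ≤ ‖g' - g‖ * (‖g' - g‖ / α) :=
      mul_le_mul_of_nonneg_left (hφ.norm_sub_le_norm_gradient_sub_div hα z z') (norm_nonneg _)
    _ = 1 / α * ‖g' - g‖ ^ 2 := by ring
  have hnonneg : 0 ≤ 1 / α * ‖g' - g‖ ^ 2 := by positivity
  rw [abs_le]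
  constructor <;> linarith

theorem hasGradientAt_fenchel_s18 (hφ : StronglyConvexFirstOrder φ α) (hdiff : Differentiable ℝ φ)
    (hα : 0 < α) (u : EuclideanSpace ℝ (Fin n)) :
    HasGradientAt (fenchel φ) (gradient (fenchel φ) u) u := by
  obtain ⟨z, rfl⟩ := hφ.surjective_gradient hdiff hα u
  have h := hasGradientAt_fenchel_gradient hφ hdiff hα z
  rwa [h.gradient]

theorem bregman_gradient_fenchel (hφ : StronglyConvexFirstOrder φ α) (hdiff : Differentiable ℝ φ)
    (hα : 0 < α) (ybar u : EuclideanSpace ℝ (Fin n)) :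
    bregman φ ybar (gradient (fenchel φ) u) = φ ybar + fenchel φ u - ⟪ybar, u⟫ := by
  obtain ⟨z, rfl⟩ := hφ.surjective_gradient hdiff hα u
  rw [(hasGradientAt_fenchel_gradient hφ hdiff hα z).gradient,
    fenchel_eq_of_subgradient (hφ.add_inner_gradient_le hα.le z), bregman, inner_sub_right,
    real_inner_comm ybar]
  ring

theorem hasDerivAt_bregman_gradient_fenchel (hφ : StronglyConvexFirstOrder φ α)
    (hdiff : Differentiable ℝ φ) (hα : 0 < α) (ybar : EuclideanSpace ℝ (Fin n))
    {x : ℝ → EuclideanSpace ℝ (Fin n)} {x' : EuclideanSpace ℝ (Fin n)} {s : ℝ}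
    (hx : HasDerivAt x x' s) :
    HasDerivAt (fun s => bregman φ ybar (gradient (fenchel φ) (x s)))
      ⟪gradient (fenchel φ) (x s) - ybar, x'⟫ s := by
  have h := ((hasDerivAt_const s (φ ybar)).add
    ((hasGradientAt_fenchel_s18 hφ hdiff hα (x s)).hasFDerivAt.comp_hasDerivAt s hx)).sub
    ((innerSL ℝ ybar).hasFDerivAt.comp_hasDerivAt s hx)
  simp only [bregman_gradient_fenchel hφ hdiff hα]
  exact h.congr_deriv (by simp [inner_sub_left])

theorem antitoneOn_bregman_mirror_flow {f : EuclideanSpace ℝ (Fin n) → ℝ}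
    (hf : Differentiable ℝ f) (hfconv : ConvexOn ℝ Set.univ f) {ybar : EuclideanSpace ℝ (Fin n)}
    (hmin : ∀ z, f ybar ≤ f z) (hφ : StronglyConvexFirstOrder φ α)
    (hdiff : Differentiable ℝ φ) (hα : 0 < α) {x : ℝ → EuclideanSpace ℝ (Fin n)}
    (hode : ∀ t, 0 ≤ t → HasDerivAt x (-gradient f (gradient (fenchel φ) (x t))) t) :
    AntitoneOn (fun t => bregman φ ybar (gradient (fenchel φ) (x t))) (Set.Ici 0) := by
  have hderiv t (ht : 0 ≤ t) := hasDerivAt_bregman_gradient_fenchel hφ hdiff hα ybar (hode t ht)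
  refine antitoneOn_of_hasDerivWithinAt_nonpos (convex_Ici 0)
    (fun t ht => (hderiv t ht).continuousAt.continuousWithinAt)
    (fun t ht => (hderiv t (interior_subset ht)).hasDerivWithinAt) fun t _ => ?_
  set y := gradient (fenchel φ) (x t)
  calc ⟪y - ybar, -gradient f y⟫ = ⟪gradient f y, ybar - y⟫ := by
        rw [inner_neg_right, real_inner_comm, ← inner_neg_right, neg_sub]
    _ ≤ f ybar - f y := hfconv.inner_gradient_le_sub (hf y) ybar
    _ ≤ 0 := sub_nonpos.2 (hmin y)

end EuclideanSpace

theorem gradient_norm_bound_along_flow_general {n : ℕ} (f φ : EuclideanSpace ℝ (Fin n) → ℝ)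
    (hf : ContDiff ℝ 1 f) (hfconv : StrictConvexOn ℝ Set.univ f)
    (ybar : EuclideanSpace ℝ (Fin n)) (hmin : ∀ z, f ybar ≤ f z)
    (Lf : NNReal) (hLip : LipschitzWith Lf (gradient f))
    (hφ : ContDiff ℝ 2 φ)
    (α : ℝ) (hα : 0 < α)
    (hstrong : ∀ y y' : EuclideanSpace ℝ (Fin n),
      φ y + ⟪gradient φ y, y' - y⟫ + (α / 2) * ‖y' - y‖^2 ≤ φ y')
    (x y : ℝ → EuclideanSpace ℝ (Fin n))
    (hode : ∀ t : ℝ, 0 ≤ t →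
      HasDerivAt x (-gradient f (gradient (fenchel φ) (x t))) t)
    (hy : y = fun t => gradient (fenchel φ) (x t)) :
    ∀ t : ℝ, 0 ≤ t →
      ‖gradient f (y t)‖
        ≤ 2 * (Lf : ℝ) * Real.sqrt ((2 / α) * bregman φ ybar (y 0))
          + ‖gradient f (y 0)‖ := by
  intro t ht
  have hdecay : bregman φ ybar (y t) ≤ bregman φ ybar (y 0) := by
    subst hy
    exact antitoneOn_bregman_mirror_flow (hf.differentiable one_ne_zero) hfconv.convexOn hmin
      hstrong (hφ.differentiable two_ne_zero) hα hode Set.self_mem_Ici ht ht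
  have hdist : ‖y t - ybar‖ ≤ √(2 / α * bregman φ ybar (y 0)) := by
    rw [norm_sub_rev]
    refine Real.le_sqrt_of_sq_le ((StronglyConvexFirstOrder.sq_norm_sub_le_bregman hstrong hα
      (y t) ybar).trans ?_)
    gcongr
  have hcrit : gradient f ybar = 0 :=
    ((isMinOn_univ_iff.2 hmin).isLocalMin univ_mem).gradient_eq_zero
  calc ‖gradient f (y t)‖ = ‖gradient f (y t) - gradient f ybar‖ := by rw [hcrit, sub_zero]
    _ ≤ Lf * ‖y t - ybar‖ := hLip.norm_sub_le _ _
    _ ≤ Lf * √(2 / α * bregman φ ybar (y 0)) := by gcongr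
    _ ≤ _ := by
      have := mul_nonneg Lf.coe_nonneg (Real.sqrt_nonneg (2 / α * bregman φ ybar (y 0)))
      linarith [norm_nonneg (gradient f (y 0))]

/-- if `∇f` is `L_f`-Lipschitz and `φ` is `α`-strongly convex, then along
the mirror-descent closed loop,
`|∇f(y(t))| ≤ 2 L_f √((2/α) D_φ(ȳ, y(0))) + |∇f(y(0))|` for all `t ≥ 0`. -/
theorem gradient_norm_bound_along_flow {n : ℕ} (f φ : EuclideanSpace ℝ (Fin n) → ℝ)
    (hf : ContDiff ℝ 1 f) (hfconv : StrictConvexOn ℝ Set.univ f)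
    (ybar : EuclideanSpace ℝ (Fin n)) (hmin : ∀ z, f ybar ≤ f z)
    (Lf : NNReal) (hLip : LipschitzWith Lf (gradient f))
    (hφ : ContDiff ℝ 2 φ)
    (α : ℝ) (hα : 0 < α)
    (hstrong : ∀ y y' : EuclideanSpace ℝ (Fin n),
      φ y + ⟪gradient φ y, y' - y⟫ + (α / 2) * ‖y' - y‖^2 ≤ φ y')
    (hφconv : StrictConvexOn ℝ Set.univ φ)
    (hleg : LegendreType φ)
    (x y : ℝ → EuclideanSpace ℝ (Fin n))
    (hode : ∀ t : ℝ, 0 ≤ t →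
      HasDerivAt x (-gradient f (gradient (fenchel φ) (x t))) t)
    (hy : y = fun t => gradient (fenchel φ) (x t)) :
    ∀ t : ℝ, 0 ≤ t →
      ‖gradient f (y t)‖
        ≤ 2 * (Lf : ℝ) * Real.sqrt ((2 / α) * bregman φ ybar (y 0))
          + ‖gradient f (y 0)‖ :=
  gradient_norm_bound_along_flow_general f φ hf hfconv ybar hmin Lf hLip hφ α hα hstrong x y hode hy
end
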